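/- Let h : ℝ → ℝ be 12 times continuously differentiable on [-1,1] with h^{(12)}(t) ≥ 0 for all t ∈ (-1,1), and let f be a real polynomial of degree at most 11 satisfying f(a) = h(a) and f'(a) = h'(a) for each a ∈ {-1, -1/6, 0, 1/6}, and f(b) = h(b) for each b ∈ {-1/2, -1/3, 1/3, 1/2}. Then f(t) ≤ h(t) for every t ∈ [-1,1] \ T₂, where T₂ = (-1/2,-1/3) ∪ (1/3,1/2). -/

import Mathlib

/-- The avoiding set `T₂ = (-1/2,-1/3) ∪ (1/3,1/2)`. -/
def T2 : Set ℝ := Set.Ioo (-1/2) (-1/3) ∪ Set.Ioo (1/3) (1/2)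

/-! For `t` not a node, choose `c` with `h t = p t + c ω(t)`, where
`ω = ∏_{x ∈ S} (X - x) · ∏_{x ∈ R} (X - x)` is the Hermite nodal polynomial of the simple nodes
`S` and the double nodes `R ⊆ S`. Then `h - p - c ω` vanishes on `S ∪ {t}` and its derivative
vanishes on `R`, so Rolle's theorem applied `n` times yields `ξ` with `h⁽ⁿ⁾(ξ) = c n!`: the
mean-value form of the Hermite remainder. For the nodes at hand
`ω(t) = ((t + 1)(t + 1/6) t (t - 1/6))² (t² - 1/4)(t² - 1/9)`, which is nonnegative off `T₂`,
and `h⁽¹²⁾ ≥ 0` gives `f ≤ h`. -/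

open Polynomial Set Lagrange

theorem Polynomial.Monic.iterate_derivative_natDegree {R : Type*} [CommSemiring R] {p : R[X]}
    (hp : p.Monic) : derivative^[p.natDegree] p = C (p.natDegree.factorial : R) := by
  rw [eq_C_of_natDegree_le_zero ((natDegree_iterate_derivative p _).trans (Nat.sub_self _).le),
    coeff_iterate_derivative, zero_add, hp.coeff_natDegree, Nat.descFactorial_self,
    nsmul_eq_mul, mul_one]

section HermiteNodal

variable {F : Type*} [Field F] {S R : Finset F}

theorem eval_nodal_id_of_mem {s : Finset F} {x : F} (hx : x ∈ s) : (nodal s id).eval x = 0 :=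
  eval_nodal_at_node (v := id) hx

noncomputable def hermiteNodal (S R : Finset F) : F[X] := nodal S id * nodal R id

theorem hermiteNodal_monic : (hermiteNodal S R).Monic := nodal_monic.mul nodal_monic

theorem natDegree_hermiteNodal : (hermiteNodal S R).natDegree = S.card + R.card := by
  rw [hermiteNodal, nodal_monic.natDegree_mul nodal_monic, natDegree_nodal, natDegree_nodal]

theorem eval_hermiteNodal_of_mem {x : F} (hx : x ∈ S) : (hermiteNodal S R).eval x = 0 := by
  rw [hermiteNodal, eval_mul, eval_nodal_id_of_mem hx, zero_mul]

theorem eval_hermiteNodal_ne_zero (hRS : R ⊆ S) {x : F} (hx : x ∉ S) :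
    (hermiteNodal S R).eval x ≠ 0 := by
  rw [hermiteNodal, eval_mul]
  exact mul_ne_zero (eval_nodal_not_at_node fun i hi h => hx (h ▸ hi))
    (eval_nodal_not_at_node fun i hi h => hx (h ▸ hRS hi))

theorem eval_derivative_hermiteNodal_of_mem (hRS : R ⊆ S) {x : F} (hx : x ∈ R) :
    (derivative (hermiteNodal S R)).eval x = 0 := by
  rw [hermiteNodal, derivative_mul, eval_add, eval_mul, eval_mul,
    eval_nodal_id_of_mem hx, eval_nodal_id_of_mem (hRS hx), mul_zero, zero_mul,
    add_zero]

end HermiteNodal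

section Rolle

variable {a b : ℝ}

theorem exists_finset_hasDerivAt_eq_zero {g g' : ℝ → ℝ} {S : Finset ℝ} (hS : ↑S ⊆ Icc a b)
    (hg : ContinuousOn g (Icc a b)) (hg' : ∀ x ∈ Ioo a b, HasDerivAt g (g' x) x)
    (hS0 : ∀ x ∈ S, g x = 0) :
    ∃ T : Finset ℝ, ↑T ⊆ Ioo a b ∧ Disjoint S T ∧ (∀ x ∈ T, g' x = 0) ∧
      S.card ≤ T.card + 1 := by
  induction S using Finset.induction_on_max generalizing b with
  | empty => exact ⟨∅, by simp, by simp, by simp, by simp⟩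
  | insert c s hsc ih =>
    rcases s.eq_empty_or_nonempty with rfl | hne
    · exact ⟨∅, by simp, by simp, by simp, by simp⟩
    set m := s.max' hne
    have hms : m ∈ s := s.max'_mem hne
    have hmc : m < c := hsc m hms
    have hcI : c ∈ Icc a b := hS (by simp)
    have hsI : ↑s ⊆ Icc a m := fun x hx =>
      ⟨(hS (Finset.mem_insert_of_mem hx)).1, s.le_max' x hx⟩
    have hmb : m ≤ b := hmc.le.trans hcI.2
    obtain ⟨T, hTI, hsT, hT0, hcard⟩ := ih hsI (hg.mono (Icc_subset_Icc_right hmb))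
      (fun x hx => hg' x (Ioo_subset_Ioo_right hmb hx))
      (fun x hx => hS0 x (Finset.mem_insert_of_mem hx))
    -- Rolle between the two largest zeros of `insert c s` gives a new zero of `g'` right of `T`.
    obtain ⟨d, hd, hd0⟩ := exists_hasDerivAt_eq_zero hmc
      (hg.mono (Icc_subset_Icc (hsI hms).1 hcI.2))
      (by rw [hS0 m (Finset.mem_insert_of_mem hms), hS0 c (Finset.mem_insert_self c s)])
      (fun x hx => hg' x ⟨(hsI hms).1.trans_lt hx.1, hx.2.trans_le hcI.2⟩)
    have hTm : ∀ x ∈ T, x < m := fun x hx => (hTI hx).2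
    have hdT : d ∉ T := fun hdT => (hTm d hdT).not_gt hd.1
    refine ⟨insert d T, ?_, ?_, ?_, ?_⟩
    · rw [Finset.coe_insert]
      exact insert_subset ⟨(hsI hms).1.trans_lt hd.1, hd.2.trans_le hcI.2⟩
        (hTI.trans (Ioo_subset_Ioo_right hmb))
    · rw [Finset.disjoint_insert_left, Finset.disjoint_insert_right]
      refine ⟨fun hcdT => ?_, fun hds => (s.le_max' d hds).not_gt hd.1, hsT⟩
      rcases Finset.mem_insert.mp hcdT with hcd | hcT
      exacts [hd.2.ne' hcd, (hTm c hcT).not_gt hmc]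
    · intro x hx
      rcases Finset.mem_insert.mp hx with rfl | hx
      exacts [hd0, hT0 x hx]
    · rw [Finset.card_insert_of_notMem (fun h => (hsc c h).false),
        Finset.card_insert_of_notMem hdT]
      omega

theorem exists_finset_iterate_hasDerivAt_eq_zero {D : ℕ → ℝ → ℝ} (m : ℕ)
    (hcont : ∀ k ≤ m, ContinuousOn (D k) (Icc a b))
    (hderiv : ∀ k ≤ m, ∀ x ∈ Ioo a b, HasDerivAt (D k) (D (k + 1) x) x)
    {S : Finset ℝ} (hS : ↑S ⊆ Icc a b) (hS0 : ∀ x ∈ S, D 0 x = 0) :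
    ∃ T : Finset ℝ, ↑T ⊆ Ioo a b ∧ (∀ x ∈ T, D (m + 1) x = 0) ∧ S.card ≤ T.card + (m + 1) := by
  induction m with
  | zero =>
    obtain ⟨T, hTI, -, hT0, hcard⟩ :=
      exists_finset_hasDerivAt_eq_zero hS (hcont 0 le_rfl) (hderiv 0 le_rfl) hS0
    exact ⟨T, hTI, hT0, hcard⟩
  | succ m ih =>
    obtain ⟨T, hTI, hT0, hcard⟩ :=
      ih (fun k hk => hcont k (by omega)) (fun k hk => hderiv k (by omega))
    obtain ⟨U, hUI, -, hU0, hUcard⟩ := exists_finset_hasDerivAt_eq_zero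
      (hTI.trans Ioo_subset_Icc_self) (hcont (m + 1) le_rfl) (hderiv (m + 1) le_rfl) hT0
    exact ⟨U, hUI, hU0, by omega⟩

theorem exists_mem_Ioo_eq_zero_of_double_zeros {D : ℕ → ℝ → ℝ} (m : ℕ)
    (hcont : ∀ k ≤ m, ContinuousOn (D k) (Icc a b))
    (hderiv : ∀ k ≤ m, ∀ x ∈ Ioo a b, HasDerivAt (D k) (D (k + 1) x) x)
    {S R : Finset ℝ} (hS : ↑S ⊆ Icc a b) (hRS : R ⊂ S) (hS0 : ∀ x ∈ S, D 0 x = 0)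
    (hR1 : ∀ x ∈ R, D 1 x = 0) (hcard : m + 2 ≤ S.card + R.card) :
    ∃ ξ ∈ Ioo a b, D (m + 1) ξ = 0 := by
  obtain ⟨T, hTI, hST, hT0, hTcard⟩ :=
    exists_finset_hasDerivAt_eq_zero hS (hcont 0 (Nat.zero_le _)) (hderiv 0 (Nat.zero_le _)) hS0
  -- `R ⊂ S` matters for `m = 0`: a lone double zero at an endpoint gives no interior zero of `D 1`.
  have hRcard := Finset.card_lt_card hRS
  suffices ∃ U : Finset ℝ, ↑U ⊆ Ioo a b ∧ (∀ x ∈ U, D (m + 1) x = 0) ∧ U.Nonempty by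
    obtain ⟨U, hUI, hU0, ξ, hξ⟩ := this
    exact ⟨ξ, hUI hξ, hU0 ξ hξ⟩
  cases m with
  | zero => exact ⟨T, hTI, hT0, Finset.card_pos.mp (by omega)⟩
  | succ m =>
    have hTR : Disjoint T R := (hST.mono_left hRS.subset).symm
    obtain ⟨U, hUI, hU0, hUcard⟩ := exists_finset_iterate_hasDerivAt_eq_zero
      (D := fun k => D (k + 1)) m (fun k hk => hcont (k + 1) (by omega))
      (fun k hk => hderiv (k + 1) (by omega)) (S := T ∪ R)
      (by
        rw [Finset.coe_union]
        exact union_subset (hTI.trans Ioo_subset_Icc_self) (fun x hx => hS (hRS.subset hx)))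
      (fun x hx => (Finset.mem_union.mp hx).elim (hT0 x) (hR1 x))
    rw [Finset.card_union_of_disjoint hTR] at hUcard
    exact ⟨U, hUI, hU0, Finset.card_pos.mp (by omega)⟩

end Rolle

section HermiteRemainder

variable {a b : ℝ} {h : ℝ → ℝ}

theorem hasDerivAt_iteratedDerivWithin_Icc {n k : ℕ} (hh : ContDiffOn ℝ n h (Icc a b))
    (hk : k < n) {x : ℝ} (hx : x ∈ Ioo a b) :
    HasDerivAt (iteratedDerivWithin k h (Icc a b))
      (iteratedDerivWithin (k + 1) h (Icc a b) x) x := by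
  have hI : Icc a b ∈ nhds x := Icc_mem_nhds hx.1 hx.2
  have hdiff := hh.differentiableOn_iteratedDerivWithin (by exact_mod_cast hk)
    (uniqueDiffOn_Icc (hx.1.trans hx.2)) x (Ioo_subset_Icc_self hx)
  rw [iteratedDerivWithin_succ, derivWithin_of_mem_nhds hI]
  exact (hdiff.differentiableAt hI).hasDerivAt

theorem exists_iteratedDerivWithin_eq_iterate_derivative_eval (hab : a < b) {m : ℕ}
    (hh : ContDiffOn ℝ (m + 1 : ℕ) h (Icc a b)) (q : ℝ[X]) {S R : Finset ℝ}
    (hS : ↑S ⊆ Icc a b) (hRS : R ⊂ S) (hqS : ∀ x ∈ S, q.eval x = h x)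
    (hqR : ∀ x ∈ R, (derivative q).eval x = derivWithin h (Icc a b) x)
    (hcard : m + 2 ≤ S.card + R.card) :
    ∃ ξ ∈ Ioo a b, iteratedDerivWithin (m + 1) h (Icc a b) ξ = (derivative^[m + 1] q).eval ξ := by
  obtain ⟨ξ, hξ, hξ0⟩ := exists_mem_Ioo_eq_zero_of_double_zeros
    (D := fun k x => iteratedDerivWithin k h (Icc a b) x - (derivative^[k] q).eval x) m
    (fun k hk => (hh.continuousOn_iteratedDerivWithin (by exact_mod_cast hk.trans m.le_succ)
      (uniqueDiffOn_Icc hab)).sub (Polynomial.continuous _).continuousOn)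
    (fun k hk x hx => (hasDerivAt_iteratedDerivWithin_Icc hh (by omega) hx).sub (by
      rw [Function.iterate_succ_apply']
      exact (derivative^[k] q).hasDerivAt x))
    hS hRS (fun x hx => by simp [hqS x hx]) (fun x hx => by simp [hqR x hx]) hcard
  exact ⟨ξ, hξ, sub_eq_zero.mp hξ0⟩

theorem hermite_mean_remainder (hab : a < b) {S R : Finset ℝ} (hS : ↑S ⊆ Icc a b)
    (hRS : R ⊆ S) {n : ℕ} (hn : S.card + R.card = n) (hh : ContDiffOn ℝ n h (Icc a b))
    {p : ℝ[X]} (hp : p.natDegree < n) (hpS : ∀ x ∈ S, p.eval x = h x)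
    (hpR : ∀ x ∈ R, (derivative p).eval x = derivWithin h (Icc a b) x)
    {t : ℝ} (ht : t ∈ Icc a b) :
    ∃ ξ ∈ Ioo a b, h t - p.eval t =
      iteratedDerivWithin n h (Icc a b) ξ / n.factorial * (hermiteNodal S R).eval t := by
  by_cases htS : t ∈ S
  · exact ⟨(a + b) / 2, ⟨by linarith, by linarith⟩, by
      rw [hpS t htS, eval_hermiteNodal_of_mem htS, sub_self, mul_zero]⟩
  set w := hermiteNodal S R
  have hwt : w.eval t ≠ 0 := eval_hermiteNodal_ne_zero hRS htS
  obtain ⟨m, rfl⟩ : ∃ m, n = m + 1 := Nat.exists_eq_add_one.mpr (by omega)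
  -- `c` is chosen so that `h - (p + c w)` also vanishes at `t`.
  set c := (h t - p.eval t) / w.eval t
  have hwn : derivative^[m + 1] w = C ((m + 1).factorial : ℝ) := by
    rw [← hn, ← natDegree_hermiteNodal]
    exact hermiteNodal_monic.iterate_derivative_natDegree
  obtain ⟨ξ, hξ, hξeq⟩ := exists_iteratedDerivWithin_eq_iterate_derivative_eval hab hh
    (p + C c * w) (S := insert t S) (R := R)
    (by rw [Finset.coe_insert]; exact insert_subset ht hS)
    (Finset.ssubset_iff_subset_ne.mpr ⟨hRS.trans (Finset.subset_insert t S),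
      fun hR => htS (hRS (hR ▸ Finset.mem_insert_self t S))⟩)
    (fun x hx => by
      rcases Finset.mem_insert.mp hx with rfl | hx
      · simp only [eval_add, eval_mul, eval_C, c]; field_simp; ring
      · simp [hpS x hx, w, eval_hermiteNodal_of_mem hx])
    (fun x hx => by simp [hpR x hx, w, eval_derivative_hermiteNodal_of_mem hRS hx])
    (by rw [Finset.card_insert_of_notMem htS]; omega)
  refine ⟨ξ, hξ, ?_⟩
  rw [hξeq, iterate_map_add, iterate_derivative_C_mul, iterate_derivative_eq_zero hp, hwn,
    zero_add, eval_mul, eval_C, eval_C, mul_div_cancel_right₀ _ (by positivity),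
    div_mul_cancel₀ _ hwt]

end HermiteRemainder

theorem mul_sq_sub_nonneg_of_notMem_T2 {t : ℝ} (ht : t ∉ T2) :
    0 ≤ (t ^ 2 - 1 / 4) * (t ^ 2 - 1 / 9) := by
  simp only [T2, mem_union, mem_Ioo, not_or, not_and, not_lt] at ht
  rcases le_or_gt (t ^ 2) (1 / 9) with ht9 | ht9
  · exact mul_nonneg_of_nonpos_of_nonpos (by linarith) (by linarith)
  · have ht4 : 1 / 4 ≤ t ^ 2 := by
      by_contra! ht4
      rcases le_or_gt t 0 with ht0 | ht0
      · nlinarith [ht.1 (by nlinarith)]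
      · nlinarith [ht.2 (by nlinarith)]
    exact mul_nonneg (by linarith) (by linarith)

theorem eval_hermiteNodal_T2 (t : ℝ) :
    (hermiteNodal ({-1, -1/6, 0, 1/6} ∪ {-1/2, -1/3, 1/3, 1/2}) {-1, -1/6, 0, 1/6}).eval t =
      ((t + 1) * (t + 1/6) * t * (t - 1/6)) ^ 2 * ((t ^ 2 - 1 / 4) * (t ^ 2 - 1 / 9)) := by
  rw [hermiteNodal, eval_mul, eval_nodal, eval_nodal]
  norm_num [Finset.prod_insert]
  ring

theorem hermite_interpolant_below_T2 (h : ℝ → ℝ)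
    (hsmooth : ContDiffOn ℝ 12 h (Set.Icc (-1 : ℝ) 1))
    (h12 : ∀ t ∈ Set.Ioo (-1 : ℝ) 1,
      0 ≤ iteratedDerivWithin 12 h (Set.Icc (-1 : ℝ) 1) t)
    (f : Polynomial ℝ) (hdeg : f.natDegree ≤ 11)
    (hdouble : ∀ a ∈ ({-1, -1/6, 0, 1/6} : Set ℝ),
      f.eval a = h a ∧
        (Polynomial.derivative f).eval a = derivWithin h (Set.Icc (-1 : ℝ) 1) a)
    (hsingle : ∀ b ∈ ({-1/2, -1/3, 1/3, 1/2} : Set ℝ), f.eval b = h b) :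
    ∀ t ∈ Set.Icc (-1 : ℝ) 1 \ T2, f.eval t ≤ h t := by
  rintro t ⟨ht, htT⟩
  obtain ⟨ξ, hξ, hrem⟩ := hermite_mean_remainder (by norm_num) (n := 12)
    (S := {-1, -1/6, 0, 1/6} ∪ {-1/2, -1/3, 1/3, 1/2}) (R := {-1, -1/6, 0, 1/6})
    (by
      intro x hx
      simp only [Finset.coe_union, Finset.coe_insert, Finset.coe_singleton, mem_union,
        mem_insert_iff, mem_singleton_iff] at hx
      rcases hx with (rfl | rfl | rfl | rfl) | (rfl | rfl | rfl | rfl) <;> norm_num)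
    Finset.subset_union_left
    (by norm_num [Finset.card_insert_of_notMem]) hsmooth (by omega)
    (fun x hx => (Finset.mem_union.mp hx).elim (fun hx => (hdouble x (by simpa using hx)).1)
      (fun hx => hsingle x (by simpa using hx)))
    (fun x hx => (hdouble x (by simpa using hx)).2) ht
  rw [← sub_nonneg, hrem, eval_hermiteNodal_T2]
  exact mul_nonneg (div_nonneg (h12 ξ hξ) (by positivity))
    (mul_nonneg (sq_nonneg _) (mul_sq_sub_nonneg_of_notMem_T2 htT))
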